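/- arXiv:2603.11719 — 2 statements merged into one kernel-verified Lean document; each statement's English description precedes it below -/
import Mathlib

section
/- In the bipartite SBM with edge split, suppose Assumption 1 holds with constant π₀, B = ρB₀ with B₀ having distinct columns, K₂' < K₂, and min{n₁,n₂}(1−w) → ∞. Suppose the side-1 partition {Ĝ_k}_{k∈[K₁]} satisfies |Ĝ_k ∩ G_k| ≥ π₀n₁/2 for all k ∈ [K₁] with probability tending to 1 (as guaranteed by the label-consistency result at the true candidate), and let {Ĥ_l}_{l∈[K₂']} be any partition of [n₂]. Define Î_{k₁k₂} = (Ĝ_{k₁}×Ĥ_{k₂}) ∩ 𝓔ᶜ and I_{l₁l₂} = (G_{l₁}×H_{l₂}) ∩ 𝓔ᶜ. Then there is a constant c̃ > 0 depending only on K₂ and π₀ such that, with probability tending to 1 as (n₁,n₂) → ∞, there exist distinct l₁, l₂ ∈ [K₂] and l₀ ∈ [K₂'] such that for all k ∈ [K₁]: |Î_{k l₀} ∩ I_{k l₁}| ≥ c̃·n₁n₂(1−w) and |Î_{k l₀} ∩ I_{k l₂}| ≥ c̃·n₁n₂(1−w). -/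
open MeasureTheory ProbabilityTheory Matrix Filter Finset
open scoped ENNReal Topology

namespace BCV

/-- Spectral (operator) norm of a real matrix. -/
noncomputable def specNorm {m p : ℕ} (M : Matrix (Fin m) (Fin p) ℝ) : ℝ :=
  ‖LinearMap.toContinuousLinearMap (Matrix.toEuclideanLin M)‖

/-- Frobenius norm of a real matrix. -/
noncomputable def frobNorm {m p : ℕ} (M : Matrix (Fin m) (Fin p) ℝ) : ℝ :=
  Real.sqrt (∑ i, ∑ j, (M i j) ^ 2)

/-- Maximum absolute entry of a matrix. -/
noncomputable def maxNorm {m p : ℕ} (M : Matrix (Fin m) (Fin p) ℝ) : ℝ :=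
  ⨆ i, ⨆ j, |M i j|

/-- A membership matrix: 0/1 entries, exactly one 1 per row, no all-zero column. -/
def IsMembershipMatrix {n K : ℕ} (Z : Matrix (Fin n) (Fin K) ℝ) : Prop :=
  (∀ i k, Z i k = 0 ∨ Z i k = 1) ∧ (∀ i, ∃! k, Z i k = 1) ∧ (∀ k, ∃ i, Z i k = 1)

/-- A family of mutually independent Bernoulli random variables (valued in {0,1} ⊆ ℝ)
with success probabilities `p i`. -/
def IndepBernoulliFamily {Ω : Type*} [MeasureSpace Ω] {ι : Type*}
    (X : ι → Ω → ℝ) (p : ι → ℝ) : Prop :=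
  (∀ i, Measurable (X i)) ∧ (∀ i ω, X i ω = 0 ∨ X i ω = 1) ∧
  (∀ i, ℙ {ω | X i ω = 1} = ENNReal.ofReal (p i)) ∧
  iIndepFun (m := fun _ => Real.measurableSpace) X ℙ

/-- A random 0/1 matrix with mutually independent Bernoulli entries of means `P i j`. -/
def BernoulliMatrix {Ω : Type*} [MeasureSpace Ω] {n₁ n₂ : ℕ}
    (A : Ω → Matrix (Fin n₁) (Fin n₂) ℝ) (P : Matrix (Fin n₁) (Fin n₂) ℝ) : Prop :=
  IndepBernoulliFamily (fun (q : Fin n₁ × Fin n₂) ω => A ω q.1 q.2) (fun q => P q.1 q.2)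

/-- Bipartite SBM bi-adjacency matrix `A` with mean `P` together with an independent
edge split `G` (i.i.d. Bernoulli(w) training indicators), all entries mutually independent. -/
def SBMSplit {Ω : Type*} [MeasureSpace Ω] {n₁ n₂ : ℕ}
    (A G : Ω → Matrix (Fin n₁) (Fin n₂) ℝ)
    (P : Matrix (Fin n₁) (Fin n₂) ℝ) (w : ℝ) : Prop :=
  IndepBernoulliFamily
    (Sum.elim (fun (q : Fin n₁ × Fin n₂) ω => A ω q.1 q.2)
              (fun (q : Fin n₁ × Fin n₂) ω => G ω q.1 q.2))
    (Sum.elim (fun q => P q.1 q.2) (fun _ => w))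

/-- `U S Vᵀ` is a rank-`k` truncated SVD of `M`: orthonormal columns, diagonal nonnegative
middle factor, and `U S Vᵀ` is a best Frobenius-norm approximation of `M` among matrices of
rank at most `k` (Eckart–Young characterization). -/
def IsTruncSVD {m p : ℕ} (k : ℕ) (M : Matrix (Fin m) (Fin p) ℝ)
    (U : Matrix (Fin m) (Fin k) ℝ) (S : Matrix (Fin k) (Fin k) ℝ)
    (V : Matrix (Fin p) (Fin k) ℝ) : Prop :=
  U.transpose * U = 1 ∧ V.transpose * V = 1 ∧
  (∀ i j, i ≠ j → S i j = 0) ∧ (∀ i, 0 ≤ S i i) ∧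
  ∀ N : Matrix (Fin m) (Fin p) ℝ, N.rank ≤ k →
    frobNorm (M - U * S * V.transpose) ≤ frobNorm (M - N)

/-- k-means objective of the labeling `g` with centroids `x` on the rows of `U`. -/
noncomputable def kmeansObj {n d K : ℕ} (U : Matrix (Fin n) (Fin d) ℝ)
    (g : Fin n → Fin K) (x : Fin K → Fin d → ℝ) : ℝ :=
  ∑ i, ∑ j, (U i j - x (g i) j) ^ 2

/-- `g` is an `M`-approximate k-means labeling of the rows of `U`: for some choice of
centroids its objective is within a factor `M` of the global optimum over all labelings
and centroids. -/
def IsApproxKMeans (M : ℝ) {n d K : ℕ} (U : Matrix (Fin n) (Fin d) ℝ)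
    (g : Fin n → Fin K) : Prop :=
  ∃ x : Fin K → Fin d → ℝ, ∀ (g' : Fin n → Fin K) (x' : Fin K → Fin d → ℝ),
    kmeansObj U g x ≤ M * kmeansObj U g' x'

/-- Estimated block probability `B̂_{k₁k₂}` from the training entries. -/
noncomputable def Bhat {n₁ n₂ K₁' K₂' : ℕ} (A G : Matrix (Fin n₁) (Fin n₂) ℝ)
    (c1 : Fin n₁ → Fin K₁') (c2 : Fin n₂ → Fin K₂') (k₁ : Fin K₁') (k₂ : Fin K₂') : ℝ :=
  (∑ i, ∑ j, if G i j = 1 ∧ c1 i = k₁ ∧ c2 j = k₂ then A i j else 0) /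
  (∑ i, ∑ j, if G i j = 1 ∧ c1 i = k₁ ∧ c2 j = k₂ then (1 : ℝ) else 0)

/-- Fitted test loss `ℓ_{K₁',K₂'}(A, 𝓔ᶜ) = ∑_{(i,j) ∈ 𝓔ᶜ} (A_{ij} − P̂_{ij})²`. -/
noncomputable def fittedLoss {n₁ n₂ K₁' K₂' : ℕ} (A G : Matrix (Fin n₁) (Fin n₂) ℝ)
    (c1 : Fin n₁ → Fin K₁') (c2 : Fin n₂ → Fin K₂') : ℝ :=
  ∑ i, ∑ j, if G i j = 1 then 0 else (A i j - Bhat A G c1 c2 (c1 i) (c2 j)) ^ 2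

/-- Oracle test loss `ℓ₀(A, 𝓔ᶜ) = ∑_{(i,j) ∈ 𝓔ᶜ} (A_{ij} − P_{ij})²`. -/
noncomputable def oracleLoss {n₁ n₂ : ℕ} (A G P : Matrix (Fin n₁) (Fin n₂) ℝ) : ℝ :=
  ∑ i, ∑ j, if G i j = 1 then 0 else (A i j - P i j) ^ 2

/-- Cardinality `|𝓔ᶜ|` of the test set. -/
noncomputable def testCard {n₁ n₂ : ℕ} (G : Matrix (Fin n₁) (Fin n₂) ℝ) : ℝ :=
  ∑ i, ∑ j, if G i j = 1 then 0 else (1 : ℝ)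

/-- Penalized loss `L_{K₁',K₂'}(A,𝓔ᶜ) = |𝓔ᶜ|⁻¹ ℓ_{K₁',K₂'}(A,𝓔ᶜ) + K₁'K₂'·λ`. -/
noncomputable def penLoss {n₁ n₂ : ℕ} {K₁' K₂' : ℕ} (A G : Matrix (Fin n₁) (Fin n₂) ℝ)
    (c1 : Fin n₁ → Fin K₁') (c2 : Fin n₂ → Fin K₂') (lam : ℝ) : ℝ :=
  fittedLoss A G c1 c2 / testCard G + (K₁' : ℝ) * (K₂' : ℝ) * lam

/-- The labelings `c1, c2` are obtained by the BCV spectral pipeline at candidate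
`(K₁', K₂')`: for each sample point, `c1` (resp. `c2`) is an `M`-approximate k-means
labeling of the rows of the matrix of top-`min{K₁',K₂'}` left (resp. right) singular
vectors of `Y/w`. -/
def IsBCVLabeling {Ω : Type*} {n₁ n₂ : ℕ} (M : ℝ)
    (A G : Ω → Matrix (Fin n₁) (Fin n₂) ℝ) (w : ℝ) {K₁' K₂' : ℕ}
    (c1 : Ω → Fin n₁ → Fin K₁') (c2 : Ω → Fin n₂ → Fin K₂') : Prop :=
  ∀ ω, ∃ (U : Matrix (Fin n₁) (Fin (min K₁' K₂')) ℝ)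
      (S : Matrix (Fin (min K₁' K₂')) (Fin (min K₁' K₂')) ℝ)
      (V : Matrix (Fin n₂) (Fin (min K₁' K₂')) ℝ),
    IsTruncSVD (min K₁' K₂') (Matrix.of fun i j => A ω i j * G ω i j / w) U S V ∧
    IsApproxKMeans M U (c1 ω) ∧ IsApproxKMeans M V (c2 ω)

/-- Size of the `k`-th community of a label vector. -/
def commCard {n K : ℕ} (c : Fin n → Fin K) (k : Fin K) : ℕ :=
  (Finset.univ.filter fun i => c i = k).card

/-- `B̄ = N₁^{1/2} B N₂^{1/2}` built from the community sizes of the two label vectors. -/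
noncomputable def BbarOf {n₁ n₂ K₁ K₂ : ℕ} (c₁ : Fin n₁ → Fin K₁) (c₂ : Fin n₂ → Fin K₂)
    (B : Matrix (Fin K₁) (Fin K₂) ℝ) : Matrix (Fin K₁) (Fin K₂) ℝ :=
  Matrix.of fun k l => Real.sqrt (commCard c₁ k) * B k l * Real.sqrt (commCard c₂ l)

/-- Assumption 2 (incoherence): some reduced SVD `U S Vᵀ` of `B̄` has right singular
vector matrix `V` with every 2×2 principal submatrix of `V Vᵀ − I` of spectral norm
at most `1 − β`. -/
def Incoherent {K₁ K₂ : ℕ} (Bbar : Matrix (Fin K₁) (Fin K₂) ℝ) (β : ℝ) : Prop :=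
  ∃ (U : Matrix (Fin K₁) (Fin (min K₁ K₂)) ℝ)
    (S : Matrix (Fin (min K₁ K₂)) (Fin (min K₁ K₂)) ℝ)
    (V : Matrix (Fin K₂) (Fin (min K₁ K₂)) ℝ),
    U.transpose * U = 1 ∧ V.transpose * V = 1 ∧
    (∀ i j, i ≠ j → S i j = 0) ∧ (∀ i, 0 < S i i) ∧
    Bbar = U * S * V.transpose ∧
    ∀ e : Fin 2 → Fin K₂, Function.Injective e →
      specNorm (Matrix.of fun a b =>
        (V * V.transpose - (1 : Matrix (Fin K₂) (Fin K₂) ℝ)) (e a) (e b)) ≤ 1 - β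

/-- Number of nodes in true community `k` misclassified by `chat` relative to the
permutation `π`. -/
def misCount {n K : ℕ} (ctrue chat : Fin n → Fin K) (π : Equiv.Perm (Fin K)) (k : Fin K) : ℕ :=
  (Finset.univ.filter fun i => ctrue i = k ∧ chat i ≠ π k).card

/-- Number of test pairs in `(Ĝ_{k₁} × Ĥ_{k₂}) ∩ (G_{l₁} × H_{l₂}) ∩ 𝓔ᶜ`. -/
noncomputable def overlapCount {n₁ n₂ K₁ K₂ K₁' K₂' : ℕ}
    (G : Matrix (Fin n₁) (Fin n₂) ℝ)
    (c₁ : Fin n₁ → Fin K₁) (c₂ : Fin n₂ → Fin K₂)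
    (g : Fin n₁ → Fin K₁') (h : Fin n₂ → Fin K₂')
    (k₁ : Fin K₁') (k₂ : Fin K₂') (l₁ : Fin K₁) (l₂ : Fin K₂) : ℝ :=
  ∑ i, ∑ j, if G i j ≠ 1 ∧ g i = k₁ ∧ h j = k₂ ∧ c₁ i = l₁ ∧ c₂ j = l₂ then (1 : ℝ) else 0


lemma bernoulli_mgf {Ω : Type*} [MeasureSpace Ω] [IsProbabilityMeasure (ℙ : Measure Ω)]
    {X : Ω → ℝ} (hm : Measurable X) (h01 : ∀ ω, X ω = 0 ∨ X ω = 1)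
    {p : ℝ} (hp0 : 0 ≤ p) (hp : ℙ {ω | X ω = 1} = ENNReal.ofReal p) (t : ℝ) :
    mgf X ℙ t = 1 + (Real.exp t - 1) * p := by
  have hset : MeasurableSet {ω | X ω = 1} := hm (measurableSet_singleton 1)
  have hXind : ∀ ω, X ω = Set.indicator {ω | X ω = 1} (fun _ => (1:ℝ)) ω := by
    intro ω
    rcases h01 ω with h | h
    · rw [h, Set.indicator_of_notMem]
      simp [Set.mem_setOf_eq, h]
    · rw [h, Set.indicator_of_mem]
      exact h
  have hXint : Integrable X ℙ := by
    have : Integrable (Set.indicator {ω | X ω = 1} (fun _ => (1:ℝ))) ℙ :=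
      (integrable_const (1:ℝ)).indicator hset
    exact this.congr (Filter.Eventually.of_forall fun ω => (hXind ω).symm)
  have hEX : ∫ ω, X ω ∂ℙ = p := by
    rw [integral_congr_ae (Filter.Eventually.of_forall hXind),
      integral_indicator_const (1:ℝ) hset, measureReal_def, hp, smul_eq_mul, mul_one,
      ENNReal.toReal_ofReal hp0]
  have hpt : ∀ ω, Real.exp (t * X ω) = 1 + (Real.exp t - 1) * X ω := by
    intro ω
    rcases h01 ω with h | h <;> simp [h]
  rw [mgf]
  rw [integral_congr_ae (Filter.Eventually.of_forall hpt)]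
  rw [integral_add (integrable_const 1) (hXint.const_mul _), integral_const,
    integral_const_mul, hEX]
  simp

lemma chernoff_lower {Ω : Type*} [MeasureSpace Ω] [IsProbabilityMeasure (ℙ : Measure Ω)]
    {ι : Type*} {X : ι → Ω → ℝ}
    (hind : iIndepFun (m := fun _ => Real.measurableSpace) X ℙ)
    (hm : ∀ i, Measurable (X i)) (h01 : ∀ i ω, X i ω = 0 ∨ X i ω = 1)
    {p : ℝ} (hp0 : 0 ≤ p) (hp1 : p ≤ 1)
    (hp : ∀ i, ℙ {ω | X i ω = 1} = ENNReal.ofReal p) (s : Finset ι) :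
    (ℙ {ω | ∑ i ∈ s, X i ω ≤ p * s.card / 2}).toReal ≤
      Real.exp (-(1/2 - Real.exp (-1)) * (p * s.card)) := by
  classical
  set Y : Ω → ℝ := ∑ i ∈ s, X i with hY
  have hYapp : ∀ ω, Y ω = ∑ i ∈ s, X i ω := by
    intro ω; simp [hY]
  have hYmeas : Measurable Y := by
    have hY' : Y = fun ω => ∑ i ∈ s, X i ω := funext hYapp
    rw [hY']
    exact Finset.measurable_sum s fun i _ => hm i
  have hYnonneg : ∀ ω, 0 ≤ Y ω := by
    intro ω; rw [hYapp]
    exact Finset.sum_nonneg fun i _ => by rcases h01 i ω with h | h <;> simp [h]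
  have hint : Integrable (fun ω => Real.exp (-1 * Y ω)) ℙ := by
    refine (integrable_const (1:ℝ)).mono' ?_ ?_
    · exact (hYmeas.const_mul (-1)).exp.aestronglyMeasurable
    · refine Filter.Eventually.of_forall fun ω => ?_
      rw [Real.norm_eq_abs, abs_of_pos (Real.exp_pos _)]
      simpa using Real.exp_le_exp.2 (by nlinarith [hYnonneg ω] : -1 * Y ω ≤ 0)
  have hcher := measure_le_le_exp_mul_mgf (X := Y) (μ := ℙ) (t := -1)
    (p * s.card / 2) (by norm_num) hint
  have hmgf : mgf Y ℙ (-1) ≤ Real.exp (-(1 - Real.exp (-1)) * (p * s.card)) := by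
    rw [hY, hind.mgf_sum hm s]
    have hfac : ∀ i, mgf (X i) ℙ (-1) = 1 + (Real.exp (-1) - 1) * p := fun i =>
      bernoulli_mgf (hm i) (h01 i) hp0 (hp i) (-1)
    calc ∏ i ∈ s, mgf (X i) ℙ (-1) = (1 + (Real.exp (-1) - 1) * p) ^ s.card := by
          rw [Finset.prod_congr rfl fun i _ => hfac i, Finset.prod_const]
      _ ≤ (Real.exp ((Real.exp (-1) - 1) * p)) ^ s.card := by
          apply pow_le_pow_left₀
          · nlinarith [Real.exp_pos (-1)]
          · linarith [Real.add_one_le_exp ((Real.exp (-1) - 1) * p)]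
      _ = Real.exp (-(1 - Real.exp (-1)) * (p * s.card)) := by
          rw [← Real.exp_nat_mul]; ring_nf
  calc (ℙ {ω | ∑ i ∈ s, X i ω ≤ p * s.card / 2}).toReal
      = (ℙ {ω | Y ω ≤ p * s.card / 2}).toReal := by
        have : {ω | ∑ i ∈ s, X i ω ≤ p * s.card / 2} = {ω | Y ω ≤ p * s.card / 2} := by
          ext ω; simp [hYapp]
        rw [this]
    _ ≤ Real.exp (-(-1) * (p * s.card / 2)) * mgf Y ℙ (-1) := hcher
    _ ≤ Real.exp (-(-1) * (p * s.card / 2)) * Real.exp (-(1 - Real.exp (-1)) * (p * s.card)) := by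
        apply mul_le_mul_of_nonneg_left hmgf (Real.exp_pos _).le
    _ = Real.exp (-(1/2 - Real.exp (-1)) * (p * s.card)) := by
        rw [← Real.exp_add]; ring_nf

lemma badset_bound {Ω : Type*} [MeasureSpace Ω] [IsProbabilityMeasure (ℙ : Measure Ω)]
    {n₁ n₂ : ℕ} {G : Ω → Matrix (Fin n₁) (Fin n₂) ℝ} {w : ℝ}
    (hG : BernoulliMatrix G (Matrix.of fun _ _ => w)) (hw0 : 0 ≤ w) (hw1 : w ≤ 1)
    {s₁ s₂ : ℝ} (hs₁ : 0 ≤ s₁) (hs₂ : 0 ≤ s₂)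
    (S : Finset (Fin n₁)) (T : Finset (Fin n₂)) :
    ℙ {ω | s₁ ≤ (S.card : ℝ) ∧ s₂ ≤ (T.card : ℝ) ∧
        (∑ i ∈ S, ∑ j ∈ T, (1 - G ω i j)) < (1 - w) * (s₁ * s₂) / 2} ≤
      ENNReal.ofReal (Real.exp (-(1/2 - Real.exp (-1)) * ((1 - w) * (s₁ * s₂)))) := by
  classical
  obtain ⟨hGm, hG01, hGp, hGind⟩ := hG
  by_cases hS : s₁ ≤ (S.card : ℝ)
  · by_cases hT : s₂ ≤ (T.card : ℝ)
    · -- main case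
      set X : Fin n₁ × Fin n₂ → Ω → ℝ := fun q ω => 1 - G ω q.1 q.2 with hX
      have hXm : ∀ q, Measurable (X q) := fun q => measurable_const.sub (hGm q)
      have hX01 : ∀ q ω, X q ω = 0 ∨ X q ω = 1 := by
        intro q ω
        rcases hG01 q ω with h | h <;> simp [hX, h]
      have hXp : ∀ q, ℙ {ω | X q ω = 1} = ENNReal.ofReal (1 - w) := by
        intro q
        have hseteq : {ω | X q ω = 1} = {ω | G ω q.1 q.2 = 1}ᶜ := by
          ext ω
          simp only [hX, Set.mem_setOf_eq, Set.mem_compl_iff]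
          constructor
          · intro h h1; rw [h1] at h; norm_num at h
          · intro h
            rcases hG01 q ω with h0 | h1
            · have h0' : G ω q.1 q.2 = 0 := h0
              rw [h0']; ring
            · exact absurd h1 h
        have hms : MeasurableSet {ω | G ω q.1 q.2 = 1} := hGm q (measurableSet_singleton 1)
        have hq : ℙ {ω | G ω q.1 q.2 = 1} = ENNReal.ofReal w := by simpa using hGp q
        rw [hseteq, measure_compl hms (measure_ne_top _ _), hq, measure_univ,
          ← ENNReal.ofReal_one, ← ENNReal.ofReal_sub _ hw0]
      have hXind : iIndepFun (m := fun _ => Real.measurableSpace) X ℙ := by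
        have := hGind.comp (fun _ => fun x : ℝ => 1 - x)
          (fun _ => measurable_const.sub measurable_id)
        exact this
      have hcher := chernoff_lower hXind hXm hX01 (by linarith) (by linarith) hXp (S ×ˢ T)
      have hNcard : ((S ×ˢ T).card : ℝ) = (S.card : ℝ) * (T.card : ℝ) := by
        rw [Finset.card_product]; push_cast; ring
      have hsub : {ω | s₁ ≤ (S.card : ℝ) ∧ s₂ ≤ (T.card : ℝ) ∧
          (∑ i ∈ S, ∑ j ∈ T, (1 - G ω i j)) < (1 - w) * (s₁ * s₂) / 2} ⊆
          {ω | ∑ q ∈ S ×ˢ T, X q ω ≤ (1 - w) * ((S ×ˢ T).card) / 2} := by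
        intro ω hω
        obtain ⟨_, _, hlt⟩ := hω
        have hsum : ∑ q ∈ S ×ˢ T, X q ω = ∑ i ∈ S, ∑ j ∈ T, (1 - G ω i j) := by
          rw [Finset.sum_product]
        have hle : (1 - w) * (s₁ * s₂) / 2 ≤ (1 - w) * ((S ×ˢ T).card) / 2 := by
          rw [hNcard]
          have h1 : s₁ * s₂ ≤ (S.card : ℝ) * (T.card : ℝ) :=
            mul_le_mul hS hT hs₂ (Nat.cast_nonneg _)
          nlinarith
        simp only [Set.mem_setOf_eq]
        rw [hsum]; linarith
      calc ℙ _ ≤ ℙ {ω | ∑ q ∈ S ×ˢ T, X q ω ≤ (1 - w) * ((S ×ˢ T).card) / 2} :=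
            measure_mono hsub
        _ = ENNReal.ofReal ((ℙ {ω | ∑ q ∈ S ×ˢ T, X q ω ≤ (1 - w) * ((S ×ˢ T).card) / 2}).toReal) := by
            rw [ENNReal.ofReal_toReal (measure_ne_top _ _)]
        _ ≤ ENNReal.ofReal (Real.exp (-(1/2 - Real.exp (-1)) * ((1 - w) * ((S ×ˢ T).card)))) :=
            ENNReal.ofReal_le_ofReal hcher
        _ ≤ ENNReal.ofReal (Real.exp (-(1/2 - Real.exp (-1)) * ((1 - w) * (s₁ * s₂)))) := by
            apply ENNReal.ofReal_le_ofReal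
            apply Real.exp_le_exp.2
            have hc₀ : (0:ℝ) ≤ 1/2 - Real.exp (-1) := by
              have h2 : (2:ℝ) < Real.exp 1 := by
                have := Real.add_one_lt_exp (x := 1) (by norm_num)
                linarith
              have : Real.exp (-1) < 1/2 := by
                rw [Real.exp_neg]
                rw [inv_lt_comm₀ (Real.exp_pos 1) (by norm_num)] at *
                · norm_num; linarith
              linarith
            have h1 : s₁ * s₂ ≤ ((S ×ˢ T).card : ℝ) := by
              rw [hNcard]
              exact mul_le_mul hS hT hs₂ (Nat.cast_nonneg _)
            nlinarith [mul_le_mul_of_nonneg_left h1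
              (mul_nonneg hc₀ (by linarith : (0:ℝ) ≤ 1 - w))]
    · have : {ω | s₁ ≤ (S.card : ℝ) ∧ s₂ ≤ (T.card : ℝ) ∧
          (∑ i ∈ S, ∑ j ∈ T, (1 - G ω i j)) < (1 - w) * (s₁ * s₂) / 2} = ∅ := by
        ext ω; simp only [Set.mem_setOf_eq, Set.mem_empty_iff_false, iff_false]
        tauto
      rw [this]; simp
  · have : {ω | s₁ ≤ (S.card : ℝ) ∧ s₂ ≤ (T.card : ℝ) ∧
        (∑ i ∈ S, ∑ j ∈ T, (1 - G ω i j)) < (1 - w) * (s₁ * s₂) / 2} = ∅ := by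
      ext ω; simp only [Set.mem_setOf_eq, Set.mem_empty_iff_false, iff_false]
      tauto
    rw [this]; simp

lemma partition_card {n K' K : ℕ} (h : Fin n → Fin K') (c : Fin n → Fin K) (l : Fin K) :
    ∑ l₀ : Fin K', (Finset.univ.filter fun j => h j = l₀ ∧ c j = l).card
      = (Finset.univ.filter fun j => c j = l).card := by
  classical
  simp_rw [Finset.card_filter]
  rw [Finset.sum_comm]
  apply Finset.sum_congr rfl
  intro j _
  by_cases hc : c j = l <;> simp [hc]

lemma pigeon {n K' K : ℕ} (hK' : 0 < K') (hK : K' ≤ K)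
    (h : Fin n → Fin K') (c : Fin n → Fin K) (l : Fin K) {b : ℝ} (hb0 : 0 ≤ b)
    (hb : (K : ℝ) * b ≤ ((Finset.univ.filter fun j => c j = l).card : ℝ)) :
    ∃ l₀ : Fin K', b ≤ ((Finset.univ.filter fun j => h j = l₀ ∧ c j = l).card : ℝ) := by
  by_contra hcon
  push_neg at hcon
  have hne : (Finset.univ : Finset (Fin K')).Nonempty := ⟨⟨0, hK'⟩, Finset.mem_univ _⟩
  have hsum : ∑ l₀ : Fin K', ((Finset.univ.filter fun j => h j = l₀ ∧ c j = l).card : ℝ)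
      = ((Finset.univ.filter fun j => c j = l).card : ℝ) := by
    rw [← Nat.cast_sum]
    exact_mod_cast congrArg (Nat.cast : ℕ → ℝ) (partition_card h c l)
  have hlt : ∑ l₀ : Fin K', ((Finset.univ.filter fun j => h j = l₀ ∧ c j = l).card : ℝ)
      < ∑ _l₀ : Fin K', b := Finset.sum_lt_sum_of_nonempty hne fun l₀ _ => hcon l₀
  rw [Finset.sum_const, Finset.card_univ, Fintype.card_fin, nsmul_eq_mul] at hlt
  have hKb : (K' : ℝ) * b ≤ (K : ℝ) * b :=
    mul_le_mul_of_nonneg_right (by exact_mod_cast hK) hb0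
  linarith

lemma overlap_eq {n₁ n₂ K₁ K₂ K₁' K₂' : ℕ}
    (G : Matrix (Fin n₁) (Fin n₂) ℝ) (h01 : ∀ i j, G i j = 0 ∨ G i j = 1)
    (c₁ : Fin n₁ → Fin K₁) (c₂ : Fin n₂ → Fin K₂)
    (g : Fin n₁ → Fin K₁') (h : Fin n₂ → Fin K₂')
    (k : Fin K₁') (l₀ : Fin K₂') (k' : Fin K₁) (l : Fin K₂) :
    (∑ i, ∑ j, if G i j ≠ 1 ∧ g i = k ∧ h j = l₀ ∧ c₁ i = k' ∧ c₂ j = l then (1:ℝ) else 0)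
      = ∑ i ∈ Finset.univ.filter (fun i => g i = k ∧ c₁ i = k'),
          ∑ j ∈ Finset.univ.filter (fun j => h j = l₀ ∧ c₂ j = l), (1 - G i j) := by
  classical
  rw [Finset.sum_filter]
  apply Finset.sum_congr rfl
  intro i _
  by_cases hi : g i = k ∧ c₁ i = k'
  · rw [if_pos hi, Finset.sum_filter]
    apply Finset.sum_congr rfl
    intro j _
    by_cases hj : h j = l₀ ∧ c₂ j = l
    · rw [if_pos hj]
      rcases h01 i j with h0 | h1
      · rw [if_pos ⟨by rw [h0]; norm_num, hi.1, hj.1, hi.2, hj.2⟩, h0]; ring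
      · rw [if_neg (by simp [h1]), h1]; ring
    · rw [if_neg hj, if_neg (by tauto)]
  · rw [if_neg hi]
    rw [Finset.sum_eq_zero]
    intro j _
    rw [if_neg (by tauto)]


/-- uniform lower bound on test-set overlaps for underfitting
partitions on side 2, given a consistent side-1 partition (Lemma A.8). -/
theorem stmt_14 (K₁ K₂ : ℕ) (hK₁pos : 0 < K₁) (hK₂pos : 0 < K₂)
    (π₀ : ℝ) (hπ₀pos : 0 < π₀) (hπ₀le : π₀ ≤ ((max K₁ K₂ : ℕ) : ℝ)⁻¹) :
    ∃ ct > (0 : ℝ),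
    ∀ (K₂' : ℕ), 0 < K₂' → K₂' < K₂ →
    ∀ (B₀ : Matrix (Fin K₁) (Fin K₂) ℝ),
      (∀ l l', l ≠ l' → ∃ k, B₀ k l ≠ B₀ k l') →
    ∀ (n₁ n₂ : ℕ → ℕ), Tendsto n₁ atTop atTop → Tendsto n₂ atTop atTop →
    ∀ (w : ℕ → ℝ), (∀ m, 0 < w m ∧ w m < 1) →
      Tendsto (fun m => ((min (n₁ m) (n₂ m) : ℕ) : ℝ) * (1 - w m)) atTop atTop →
    ∀ (c₁ : ∀ m, Fin (n₁ m) → Fin K₁) (c₂ : ∀ m, Fin (n₂ m) → Fin K₂),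
      (∀ m k, π₀ * (n₁ m : ℝ) ≤ (commCard (c₁ m) k : ℝ)) →
      (∀ m l, π₀ * (n₂ m : ℝ) ≤ (commCard (c₂ m) l : ℝ)) →
    ∀ (Ω : ℕ → Type) [∀ m, MeasureSpace (Ω m)]
      [∀ m, IsProbabilityMeasure (ℙ : Measure (Ω m))]
      (G : ∀ m, Ω m → Matrix (Fin (n₁ m)) (Fin (n₂ m)) ℝ),
      (∀ m, BernoulliMatrix (G m) (Matrix.of fun _ _ => w m)) →
    ∀ gh : ∀ m, Ω m → Fin (n₁ m) → Fin K₁,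
      Tendsto (fun m => ℙ {ω | ∀ k : Fin K₁,
        π₀ * (n₁ m : ℝ) / 2 ≤
          ((Finset.univ.filter fun i => gh m ω i = k ∧ c₁ m i = k).card : ℝ)})
        atTop (𝓝 1) →
      Tendsto (fun m => ℙ {ω |
        ∀ h : Fin (n₂ m) → Fin K₂',
        ∃ (l₁ l₂ : Fin K₂) (l₀ : Fin K₂'),
          l₁ ≠ l₂ ∧ ∀ k : Fin K₁,
            ct * (n₁ m : ℝ) * (n₂ m : ℝ) * (1 - w m) ≤
              overlapCount (G m ω) (c₁ m) (c₂ m) (gh m ω) h k l₀ k l₁ ∧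
            ct * (n₁ m : ℝ) * (n₂ m : ℝ) * (1 - w m) ≤
              overlapCount (G m ω) (c₁ m) (c₂ m) (gh m ω) h k l₀ k l₂})
        atTop (𝓝 1) := by
  classical
  have he2 : (2:ℝ) < Real.exp 1 := by
    have := Real.add_one_lt_exp (x := 1) (by norm_num)
    linarith
  have hc₀pos : (0:ℝ) < 1/2 - Real.exp (-1) := by
    have hlt : Real.exp (-1) < 1/2 := by
      rw [Real.exp_neg]
      rw [inv_lt_comm₀ (Real.exp_pos 1) (by norm_num : (0:ℝ) < 1/2)]
      norm_num; linarith
    linarith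
  set c₀ : ℝ := 1/2 - Real.exp (-1) with hc₀
  refine ⟨π₀^2 / (4 * K₂), by positivity, ?_⟩
  set ct : ℝ := π₀^2 / (4 * K₂) with hct
  intro K₂' hK₂'pos hK₂'lt B₀ hB₀ n₁ n₂ hn₁ hn₂ w hw hmw c₁ c₂ hc₁ hc₂ Ω _ _ G hG gh hgh
  have hK₂ne : (K₂ : ℝ) ≠ 0 := Nat.cast_ne_zero.2 hK₂pos.ne'
  -- thresholds
  set s₁ : ℕ → ℝ := fun m => π₀ * (n₁ m : ℝ) / 2 with hs₁def
  set s₂ : ℕ → ℝ := fun m => π₀ * (n₂ m : ℝ) / K₂ with hs₂def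
  have hs₁0 : ∀ m, 0 ≤ s₁ m := fun m => by positivity
  have hs₂0 : ∀ m, 0 ≤ s₂ m := fun m => by positivity
  have hthr : ∀ m, (1 - w m) * (s₁ m * s₂ m) / 2
      = ct * (n₁ m : ℝ) * (n₂ m : ℝ) * (1 - w m) := by
    intro m
    simp only [hs₁def, hs₂def, hct]
    field_simp
    ring
  -- the uniform good event
  set E : ∀ m, Set (Ω m) := fun m => {ω | ∀ (S : Finset (Fin (n₁ m))) (T : Finset (Fin (n₂ m))),
      s₁ m ≤ (S.card : ℝ) → s₂ m ≤ (T.card : ℝ) →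
      (1 - w m) * (s₁ m * s₂ m) / 2 ≤ ∑ i ∈ S, ∑ j ∈ T, (1 - G m ω i j)} with hEdef
  -- Step P1: union bound
  set R : ℕ → ℝ := fun m => (2^(n₁ m) * 2^(n₂ m) : ℕ) *
      Real.exp (-c₀ * ((1 - w m) * (s₁ m * s₂ m))) with hRdef
  have hP1 : ∀ m, ℙ (E m)ᶜ ≤ ENNReal.ofReal (R m) := by
    intro m
    have hsub : (E m)ᶜ ⊆ ⋃ ST : Finset (Fin (n₁ m)) × Finset (Fin (n₂ m)),
        {ω | s₁ m ≤ (ST.1.card : ℝ) ∧ s₂ m ≤ (ST.2.card : ℝ) ∧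
          (∑ i ∈ ST.1, ∑ j ∈ ST.2, (1 - G m ω i j)) < (1 - w m) * (s₁ m * s₂ m) / 2} := by
      intro ω hω
      simp only [hEdef, Set.mem_compl_iff, Set.mem_setOf_eq, not_forall] at hω
      obtain ⟨S, T, hS, hT, hlt⟩ := hω
      exact Set.mem_iUnion.2 ⟨(S, T), hS, hT, lt_of_not_ge hlt⟩
    calc ℙ (E m)ᶜ ≤ ∑' ST : Finset (Fin (n₁ m)) × Finset (Fin (n₂ m)),
          ℙ {ω | s₁ m ≤ (ST.1.card : ℝ) ∧ s₂ m ≤ (ST.2.card : ℝ) ∧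
            (∑ i ∈ ST.1, ∑ j ∈ ST.2, (1 - G m ω i j)) < (1 - w m) * (s₁ m * s₂ m) / 2} :=
        le_trans (measure_mono hsub) (measure_iUnion_le _)
      _ ≤ ∑' _ST : Finset (Fin (n₁ m)) × Finset (Fin (n₂ m)),
          ENNReal.ofReal (Real.exp (-c₀ * ((1 - w m) * (s₁ m * s₂ m)))) := by
        apply ENNReal.tsum_le_tsum
        intro ST
        exact badset_bound (hG m) (hw m).1.le (hw m).2.le (hs₁0 m) (hs₂0 m) ST.1 ST.2
      _ = (Fintype.card (Finset (Fin (n₁ m)) × Finset (Fin (n₂ m)))) *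
          ENNReal.ofReal (Real.exp (-c₀ * ((1 - w m) * (s₁ m * s₂ m)))) := by
        rw [tsum_fintype, Finset.sum_const, Finset.card_univ, nsmul_eq_mul]
      _ = ENNReal.ofReal (R m) := by
        rw [Fintype.card_prod, Fintype.card_finset, Fintype.card_finset,
          Fintype.card_fin, Fintype.card_fin]
        rw [hRdef]
        rw [ENNReal.ofReal_mul (by positivity), ENNReal.ofReal_natCast]
  -- Step P2: R tends to 0
  have hP2 : Tendsto R atTop (𝓝 0) := by
    have hL0 : (0:ℝ) ≤ Real.log 2 := Real.log_nonneg (by norm_num)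
    set C' : ℝ := c₀ * π₀^2 / (2 * K₂) with hC'
    have hC'pos : 0 < C' := by rw [hC']; positivity
    have hev1 : ∀ᶠ m in atTop, (2 * Real.log 2 + 1) / C' ≤
        ((min (n₁ m) (n₂ m) : ℕ) : ℝ) * (1 - w m) := hmw.eventually_ge_atTop _
    have hbound : ∀ᶠ m in atTop, R m ≤ Real.exp (-(n₁ m : ℝ)) := by
      filter_upwards [hev1] with m hm
      have hp0 : (0:ℝ) ≤ 1 - w m := by linarith [(hw m).2]
      have hexp : R m = Real.exp ((n₁ m : ℝ) * Real.log 2 + (n₂ m : ℝ) * Real.log 2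
          + (-c₀ * ((1 - w m) * (s₁ m * s₂ m)))) := by
        rw [hRdef]
        push_cast
        rw [Real.exp_add, Real.exp_add, Real.exp_nat_mul, Real.exp_nat_mul,
          Real.exp_log (by norm_num : (0:ℝ) < 2)]
      rw [hexp]
      apply Real.exp_le_exp.2
      -- arithmetic
      have hmin : ((min (n₁ m) (n₂ m) : ℕ) : ℝ) = min ((n₁ m : ℕ) : ℝ) ((n₂ m : ℕ) : ℝ) := by
        push_cast [Nat.cast_min]; rfl
      have hkey : -c₀ * ((1 - w m) * (s₁ m * s₂ m))
          = -(C' * ((n₁ m : ℝ) * (n₂ m : ℝ) * (1 - w m))) := by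
        simp only [hs₁def, hs₂def, hC']
        field_simp
      rw [hkey]
      set a : ℝ := (n₁ m : ℝ)
      set b : ℝ := (n₂ m : ℝ)
      have ha0 : 0 ≤ a := Nat.cast_nonneg _
      have hb0 : 0 ≤ b := Nat.cast_nonneg _
      rcases le_total (n₁ m) (n₂ m) with hab | hab
      · have hab' : a ≤ b := Nat.cast_le.2 hab
        have hm' : (2 * Real.log 2 + 1) ≤ C' * (a * (1 - w m)) := by
          have : ((min (n₁ m) (n₂ m) : ℕ) : ℝ) = a := by
            rw [hmin, min_eq_left hab']
          rw [this] at hm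
          calc 2 * Real.log 2 + 1 = C' * ((2 * Real.log 2 + 1) / C') := by
                field_simp
            _ ≤ C' * (a * (1 - w m)) := by
                apply mul_le_mul_of_nonneg_left hm hC'pos.le
        nlinarith [mul_le_mul_of_nonneg_left hm' hb0]
      · have hab' : b ≤ a := Nat.cast_le.2 hab
        have hm' : (2 * Real.log 2 + 1) ≤ C' * (b * (1 - w m)) := by
          have : ((min (n₁ m) (n₂ m) : ℕ) : ℝ) = b := by
            rw [hmin, min_eq_right hab']
          rw [this] at hm
          calc 2 * Real.log 2 + 1 = C' * ((2 * Real.log 2 + 1) / C') := by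
                field_simp
            _ ≤ C' * (b * (1 - w m)) := by
                apply mul_le_mul_of_nonneg_left hm hC'pos.le
        nlinarith [mul_le_mul_of_nonneg_left hm' ha0]
    have hzero : Tendsto (fun m => Real.exp (-(n₁ m : ℝ))) atTop (𝓝 0) :=
      Real.tendsto_exp_atBot.comp
        (tendsto_neg_atTop_atBot.comp (tendsto_natCast_atTop_atTop.comp hn₁))
    exact squeeze_zero' (Filter.Eventually.of_forall fun m => by positivity) hbound hzero
  -- Step P3
  have hP3 : Tendsto (fun m => ℙ (E m)ᶜ) atTop (𝓝 0) := by
    have h0 : Tendsto (fun m => ENNReal.ofReal (R m)) atTop (𝓝 0) := by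
      have := ENNReal.tendsto_ofReal hP2
      simpa using this
    exact tendsto_of_tendsto_of_tendsto_of_le_of_le tendsto_const_nhds h0
      (fun m => zero_le) hP1
  -- Claim A: inclusion of events
  have hA : ∀ m, {ω | ∀ k : Fin K₁, π₀ * (n₁ m : ℝ) / 2 ≤
        ((Finset.univ.filter fun i => gh m ω i = k ∧ c₁ m i = k).card : ℝ)} ∩ E m ⊆
      {ω | ∀ h : Fin (n₂ m) → Fin K₂',
        ∃ (l₁ l₂ : Fin K₂) (l₀ : Fin K₂'),
          l₁ ≠ l₂ ∧ ∀ k : Fin K₁,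
            ct * (n₁ m : ℝ) * (n₂ m : ℝ) * (1 - w m) ≤
              overlapCount (G m ω) (c₁ m) (c₂ m) (gh m ω) h k l₀ k l₁ ∧
            ct * (n₁ m : ℝ) * (n₂ m : ℝ) * (1 - w m) ≤
              overlapCount (G m ω) (c₁ m) (c₂ m) (gh m ω) h k l₀ k l₂} := by
    intro m ω hω
    obtain ⟨hcons, hEω⟩ := hω
    intro h
    -- pigeonhole for each true community l
    have hpig : ∀ l : Fin K₂, ∃ l₀ : Fin K₂',
        s₂ m ≤ ((Finset.univ.filter fun j => h j = l₀ ∧ c₂ m j = l).card : ℝ) := by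
      intro l
      apply pigeon hK₂'pos hK₂'lt.le h (c₂ m) l (hs₂0 m)
      have := hc₂ m l
      rw [commCard] at this
      calc (K₂ : ℝ) * s₂ m = π₀ * (n₂ m : ℝ) := by
            rw [hs₂def]; field_simp
        _ ≤ _ := this
    choose F hF using hpig
    obtain ⟨l₁, l₂, hne, heq⟩ := Fintype.exists_ne_map_eq_of_card_lt F
      (by simpa [Fintype.card_fin] using hK₂'lt)
    refine ⟨l₁, l₂, F l₁, hne, ?_⟩
    intro k
    have h01 : ∀ i j, G m ω i j = 0 ∨ G m ω i j = 1 := fun i j => (hG m).2.1 (i, j) ω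
    have hS : s₁ m ≤ (((Finset.univ.filter fun i => gh m ω i = k ∧ c₁ m i = k)).card : ℝ) :=
      hcons k
    constructor
    · have := hEω (Finset.univ.filter fun i => gh m ω i = k ∧ c₁ m i = k)
        (Finset.univ.filter fun j => h j = F l₁ ∧ c₂ m j = l₁) hS (hF l₁)
      rw [← hthr m]
      calc (1 - w m) * (s₁ m * s₂ m) / 2 ≤ _ := this
        _ = overlapCount (G m ω) (c₁ m) (c₂ m) (gh m ω) h k (F l₁) k l₁ := by
          rw [overlapCount, overlap_eq (G m ω) h01]
    · have hF₂ : s₂ m ≤ ((Finset.univ.filter fun j => h j = F l₁ ∧ c₂ m j = l₂).card : ℝ) := by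
        rw [heq]; exact hF l₂
      have := hEω (Finset.univ.filter fun i => gh m ω i = k ∧ c₁ m i = k)
        (Finset.univ.filter fun j => h j = F l₁ ∧ c₂ m j = l₂) hS hF₂
      rw [← hthr m]
      calc (1 - w m) * (s₁ m * s₂ m) / 2 ≤ _ := this
        _ = overlapCount (G m ω) (c₁ m) (c₂ m) (gh m ω) h k (F l₁) k l₂ := by
          rw [overlapCount, overlap_eq (G m ω) h01]
  -- final squeeze
  have hkey : ∀ m, ℙ {ω | ∀ k : Fin K₁, π₀ * (n₁ m : ℝ) / 2 ≤
        ((Finset.univ.filter fun i => gh m ω i = k ∧ c₁ m i = k).card : ℝ)} - ℙ (E m)ᶜ ≤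
      ℙ {ω | ∀ h : Fin (n₂ m) → Fin K₂',
        ∃ (l₁ l₂ : Fin K₂) (l₀ : Fin K₂'),
          l₁ ≠ l₂ ∧ ∀ k : Fin K₁,
            ct * (n₁ m : ℝ) * (n₂ m : ℝ) * (1 - w m) ≤
              overlapCount (G m ω) (c₁ m) (c₂ m) (gh m ω) h k l₀ k l₁ ∧
            ct * (n₁ m : ℝ) * (n₂ m : ℝ) * (1 - w m) ≤
              overlapCount (G m ω) (c₁ m) (c₂ m) (gh m ω) h k l₀ k l₂} := by
    intro m
    rw [tsub_le_iff_right]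
    calc ℙ _ ≤ ℙ (({ω | ∀ k : Fin K₁, π₀ * (n₁ m : ℝ) / 2 ≤
          ((Finset.univ.filter fun i => gh m ω i = k ∧ c₁ m i = k).card : ℝ)} ∩ E m) ∪ (E m)ᶜ) := by
          apply measure_mono
          intro ω hω
          by_cases hE' : ω ∈ E m
          · exact Or.inl ⟨hω, hE'⟩
          · exact Or.inr hE'
      _ ≤ ℙ ({ω | ∀ k : Fin K₁, π₀ * (n₁ m : ℝ) / 2 ≤
          ((Finset.univ.filter fun i => gh m ω i = k ∧ c₁ m i = k).card : ℝ)} ∩ E m) + ℙ (E m)ᶜ :=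
          measure_union_le _ _
      _ ≤ _ + ℙ (E m)ᶜ := by
          gcongr
          exact hA m
  have hlow : Tendsto (fun m => ℙ {ω | ∀ k : Fin K₁, π₀ * (n₁ m : ℝ) / 2 ≤
        ((Finset.univ.filter fun i => gh m ω i = k ∧ c₁ m i = k).card : ℝ)} - ℙ (E m)ᶜ)
      atTop (𝓝 1) := by
    have := ENNReal.Tendsto.sub hgh hP3 (Or.inl ENNReal.one_ne_top)
    simpa using this
  exact tendsto_of_tendsto_of_tendsto_of_le_of_le hlow tendsto_const_nhds hkey
    (fun m => prob_le_one)

end BCV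
end

section
/- In the bipartite SBM with edge split, let K₂' > 2K₂ and let ℓ_{K₁,K₂'}(A,𝓔ᶜ) be the BCV fitted test loss at candidate (K₁,K₂') and ℓ₀(A,𝓔ᶜ) the oracle test loss. Then Pr[ℓ_{K₁,K₂'}(A,𝓔ᶜ) − ℓ₀(A,𝓔ᶜ) ≤ −2K₁²K₂K₂'·log n] ≤ 2K₁²K₂/n³, where n = max{n₁,n₂}. -/
open MeasureTheory ProbabilityTheory Matrix Filter Finset
open scoped ENNReal Topology

namespace BCV

/-- Hoeffding-type mgf bound for a centered Bernoulli-type variable, crude constant. -/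
lemma bern_mgf (p u : ℝ) (h0 : 0 ≤ p) (h1 : p ≤ 1) :
    (1 - p) * Real.exp (u * (0 - p)) + p * Real.exp (u * (1 - p)) ≤ Real.exp (u ^ 2 / 2) := by
  have key : ∀ x : ℝ, -1 ≤ x → x ≤ 1 →
      Real.exp (u * x) ≤ (1 - x) / 2 * Real.exp (-u) + (1 + x) / 2 * Real.exp u := by
    intro x hx1 hx2
    have h := convexOn_exp.2 (Set.mem_univ (-u)) (Set.mem_univ u)
      (show (0:ℝ) ≤ (1 - x) / 2 by linarith) (show (0:ℝ) ≤ (1 + x) / 2 by linarith)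
      (by ring)
    simp only [smul_eq_mul] at h
    rw [show (1 - x) / 2 * (-u) + (1 + x) / 2 * u = u * x from by ring] at h
    exact h
  have k1 := key (-p) (by linarith) (by linarith)
  have k2 := key (1 - p) (by linarith) (by linarith)
  have hp : 0 ≤ 1 - p := by linarith
  have e1 : (1 - p) * Real.exp (u * (0 - p)) ≤
      (1 - p) * ((1 - -p) / 2 * Real.exp (-u) + (1 + -p) / 2 * Real.exp u) := by
    have harg : u * (0 - p) = u * (-p) := by ring
    rw [harg]
    exact mul_le_mul_of_nonneg_left k1 hp
  have e2 : p * Real.exp (u * (1 - p)) ≤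
      p * ((1 - (1 - p)) / 2 * Real.exp (-u) + (1 + (1 - p)) / 2 * Real.exp u) :=
    mul_le_mul_of_nonneg_left k2 h0
  have hcosh : (Real.exp (-u) + Real.exp u) / 2 ≤ Real.exp (u ^ 2 / 2) := by
    have h := Real.cosh_le_exp_half_sq u
    rw [Real.cosh_eq] at h
    linarith
  nlinarith [Real.exp_pos u, Real.exp_pos (-u)]

lemma Bhat_nonneg {n₁ n₂ K₁' K₂' : ℕ} (A G : Matrix (Fin n₁) (Fin n₂) ℝ)
    (hA : ∀ i j, A i j = 0 ∨ A i j = 1)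
    (c1 : Fin n₁ → Fin K₁') (c2 : Fin n₂ → Fin K₂') (k₁ : Fin K₁') (k₂ : Fin K₂') :
    0 ≤ Bhat A G c1 c2 k₁ k₂ := by
  apply div_nonneg
  · apply Finset.sum_nonneg; intro i _; apply Finset.sum_nonneg; intro j _
    rcases hA i j with h | h <;> split <;> simp [h]
  · apply Finset.sum_nonneg; intro i _; apply Finset.sum_nonneg; intro j _
    split <;> norm_num

lemma Bhat_le_one {n₁ n₂ K₁' K₂' : ℕ} (A G : Matrix (Fin n₁) (Fin n₂) ℝ)
    (hA : ∀ i j, A i j = 0 ∨ A i j = 1)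
    (c1 : Fin n₁ → Fin K₁') (c2 : Fin n₂ → Fin K₂') (k₁ : Fin K₁') (k₂ : Fin K₂') :
    Bhat A G c1 c2 k₁ k₂ ≤ 1 := by
  apply div_le_one_of_le₀
  · apply Finset.sum_le_sum; intro i _; apply Finset.sum_le_sum; intro j _
    rcases hA i j with h | h <;> split <;> simp [h]
  · apply Finset.sum_nonneg; intro i _; apply Finset.sum_nonneg; intro j _
    split <;> norm_num

lemma Bhat_congr {n₁ n₂ K₁' K₂' : ℕ} (A A' G : Matrix (Fin n₁) (Fin n₂) ℝ)
    (h : ∀ i j, G i j = 1 → A i j = A' i j)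
    (c1 : Fin n₁ → Fin K₁') (c2 : Fin n₂ → Fin K₂') (k₁ : Fin K₁') (k₂ : Fin K₂') :
    Bhat A G c1 c2 k₁ k₂ = Bhat A' G c1 c2 k₁ k₂ := by
  unfold Bhat
  congr 1
  apply Finset.sum_congr rfl; intro i _
  apply Finset.sum_congr rfl; intro j _
  split
  · next hc => exact h i j hc.1
  · rfl


/-- Hoeffding-type tail bound for heavily overfitted candidates
(K₁, K₂') with K₂' > 2K₂ (Proposition A.10). -/
theorem stmt_17 (n₁ n₂ K₁ K₂ K₂' : ℕ)
    (hn₁ : 0 < n₁) (hn₂ : 0 < n₂)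
    (hK₁pos : 0 < K₁) (hK₂pos : 0 < K₂) (hgt : 2 * K₂ < K₂')
    (c₁ : Fin n₁ → Fin K₁) (c₂ : Fin n₂ → Fin K₂)
    (hc₁ : Function.Surjective c₁) (hc₂ : Function.Surjective c₂)
    (B : Matrix (Fin K₁) (Fin K₂) ℝ) (hB : ∀ k l, 0 ≤ B k l ∧ B k l ≤ 1)
    (w : ℝ) (hw0 : 0 < w) (hw1 : w < 1)
    (Ω : Type) [MeasureSpace Ω] [IsProbabilityMeasure (ℙ : Measure Ω)]
    (A G : Ω → Matrix (Fin n₁) (Fin n₂) ℝ)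
    (hsplit : SBMSplit A G (Matrix.of fun i j => B (c₁ i) (c₂ j)) w)
    (M : ℝ) (hM : 1 ≤ M)
    (ch1 : Ω → Fin n₁ → Fin K₁) (ch2 : Ω → Fin n₂ → Fin K₂')
    (hbcv : IsBCVLabeling M A G w ch1 ch2)
    (htrain : ∀ ω ω', G ω = G ω' →
      (Matrix.of fun i j => A ω i j * G ω i j) =
        (Matrix.of fun i j => A ω' i j * G ω' i j) →
      ch1 ω = ch1 ω' ∧ ch2 ω = ch2 ω') :
    ℙ {ω | fittedLoss (A ω) (G ω) (ch1 ω) (ch2 ω) -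
        oracleLoss (A ω) (G ω) (Matrix.of fun i j => B (c₁ i) (c₂ j)) ≤
        -(2 * (K₁ : ℝ) ^ 2 * (K₂ : ℝ) * (K₂' : ℝ) * Real.log (max n₁ n₂))} ≤
      ENNReal.ofReal (2 * (K₁ : ℝ) ^ 2 * (K₂ : ℝ) / ((max n₁ n₂ : ℕ) : ℝ) ^ 3) := by
  classical
  rw [show (max (n₁ : ℝ) (n₂ : ℝ)) = ((max n₁ n₂ : ℕ) : ℝ) from (Nat.cast_max _ _).symm]
  have hsplit' := hsplit
  unfold SBMSplit IndepBernoulliFamily at hsplit'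
  obtain ⟨hXmeas, hX01, hX1, hXindep⟩ := hsplit'
  set nn : ℕ := max n₁ n₂ with hnn
  have hnn1 : 1 ≤ nn := le_trans hn₁ (le_max_left _ _)
  set Xf : (Fin n₁ × Fin n₂) ⊕ (Fin n₁ × Fin n₂) → Ω → ℝ :=
    Sum.elim (fun (q : Fin n₁ × Fin n₂) ω => A ω q.1 q.2)
             (fun (q : Fin n₁ × Fin n₂) ω => G ω q.1 q.2) with hXf
  set pp : (Fin n₁ × Fin n₂) ⊕ (Fin n₁ × Fin n₂) → ℝ :=
    Sum.elim (fun (q : Fin n₁ × Fin n₂) => B (c₁ q.1) (c₂ q.2)) (fun _ => w) with hpp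
  have hXfA : ∀ (q : Fin n₁ × Fin n₂) ω, Xf (Sum.inl q) ω = A ω q.1 q.2 := by
    intro q ω; rw [hXf]; rfl
  have hXfG : ∀ (q : Fin n₁ × Fin n₂) ω, Xf (Sum.inr q) ω = G ω q.1 q.2 := by
    intro q ω; rw [hXf]; rfl
  have hX1' : ∀ i, ℙ {ω | Xf i ω = 1} = ENNReal.ofReal (pp i) := by
    rintro (q | q)
    · simpa [hpp] using hX1 (Sum.inl q)
    · simpa [hpp] using hX1 (Sum.inr q)
  have hp0 : ∀ i, 0 ≤ pp i := by
    rintro (q | q)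
    · exact (hB _ _).1
    · exact le_of_lt hw0
  have hp1 : ∀ i, pp i ≤ 1 := by
    rintro (q | q)
    · exact (hB _ _).2
    · exact le_of_lt hw1
  have hA01 : ∀ ω i j, A ω i j = 0 ∨ A ω i j = 1 := by
    intro ω i j
    have := hX01 (Sum.inl (i, j)) ω
    rwa [hXfA] at this
  have hG01 : ∀ ω i j, G ω i j = 0 ∨ G ω i j = 1 := by
    intro ω i j
    have := hX01 (Sum.inr (i, j)) ω
    rwa [hXfG] at this
  -- values and configurations
  set val : Bool → ℝ := fun x => if x then 1 else 0 with hvaldef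
  set cfg : Ω → ((Fin n₁ × Fin n₂) ⊕ (Fin n₁ × Fin n₂) → Bool) :=
    fun ω i => decide (Xf i ω = 1) with hcfgdef
  have hval : ∀ i ω, Xf i ω = val (cfg ω i) := by
    intro i ω
    by_cases h : Xf i ω = 1
    · simp [hcfgdef, hvaldef, h]
    · rcases hX01 i ω with h0 | h0
      · simp [hcfgdef, hvaldef, h, h0]
      · exact absurd h0 h
  -- weights
  set wt : ((Fin n₁ × Fin n₂) ⊕ (Fin n₁ × Fin n₂)) → Bool → ℝ :=
    fun i x => if x then pp i else 1 - pp i with hwtdef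
  have hwt0 : ∀ i x, 0 ≤ wt i x := by
    intro i x
    cases x
    · simpa [hwtdef] using by linarith [hp1 i]
    · simpa [hwtdef] using hp0 i
  have hwtsum : ∀ i, wt i false + wt i true = 1 := by
    intro i; simp [hwtdef]
  set W : (((Fin n₁ × Fin n₂) ⊕ (Fin n₁ × Fin n₂)) → Bool) → ℝ :=
    fun v => ∏ i, wt i (v i) with hWdef
  have hW0 : ∀ v, 0 ≤ W v := fun v => Finset.prod_nonneg fun i _ => hwt0 i (v i)
  -- atom probabilities
  have hprob1 : ∀ i, ℙ (Xf i ⁻¹' {1}) = ENNReal.ofReal (pp i) := by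
    intro i
    rw [← hX1' i]
    rfl
  have hprob0 : ∀ i, ℙ (Xf i ⁻¹' {0}) = ENNReal.ofReal (1 - pp i) := by
    intro i
    have hcompl : Xf i ⁻¹' {(0 : ℝ)} = (Xf i ⁻¹' {(1 : ℝ)})ᶜ := by
      ext ω
      simp only [Set.mem_preimage, Set.mem_singleton_iff, Set.mem_compl_iff]
      constructor
      · intro h h1; rw [h] at h1; norm_num at h1
      · intro h; rcases hX01 i ω with h0 | h0
        · exact h0
        · exact absurd h0 h
    rw [hcompl, measure_compl ((hXmeas i) (measurableSet_singleton _)) (measure_ne_top _ _),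
      hprob1 i, measure_univ, ← ENNReal.ofReal_one, ← ENNReal.ofReal_sub _ (hp0 i)]
  have hprobval : ∀ i x, ℙ (Xf i ⁻¹' {val x}) = ENNReal.ofReal (wt i x) := by
    intro i x
    cases x
    · simpa [hvaldef, hwtdef] using hprob0 i
    · simpa [hvaldef, hwtdef] using hprob1 i
  have hatom : ∀ v, ℙ (⋂ i, Xf i ⁻¹' {val (v i)}) = ENNReal.ofReal (W v) := by
    intro v
    have h := (iIndepFun_iff_measure_inter_preimage_eq_mul.mp hXindep) Finset.univ
      (sets := fun i => {val (v i)}) (fun i _ => measurableSet_singleton _)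
    rw [show (⋂ i, Xf i ⁻¹' {val (v i)}) = ⋂ i ∈ Finset.univ, Xf i ⁻¹' {val (v i)} by simp] at *
    rw [h, hWdef, ENNReal.ofReal_prod_of_nonneg fun i _ => hwt0 i (v i)]
    exact Finset.prod_congr rfl fun i _ => hprobval i (v i)
  -- the event
  set Ev : Set Ω := {ω | fittedLoss (A ω) (G ω) (ch1 ω) (ch2 ω) -
      oracleLoss (A ω) (G ω) (Matrix.of fun i j => B (c₁ i) (c₂ j)) ≤
      -(2 * (K₁ : ℝ) ^ 2 * (K₂ : ℝ) * (K₂' : ℝ) * Real.log nn)} with hEvdef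
  set S' : Finset ((((Fin n₁ × Fin n₂) ⊕ (Fin n₁ × Fin n₂))) → Bool) :=
    Finset.univ.filter (fun v => ∃ ω, cfg ω = v ∧ ω ∈ Ev) with hS'def
  have hsub : Ev ⊆ ⋃ v ∈ S', ⋂ i, Xf i ⁻¹' {val (v i)} := by
    intro ω hω
    have h1 : cfg ω ∈ S' := by
      rw [hS'def, Finset.mem_filter]
      exact ⟨Finset.mem_univ _, ω, rfl, hω⟩
    have h2 : ω ∈ ⋂ i, Xf i ⁻¹' {val (cfg ω i)} :=
      Set.mem_iInter.mpr fun i => by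
        rw [Set.mem_preimage, Set.mem_singleton_iff]; exact hval i ω
    exact Set.mem_biUnion h1 h2
  -- the real-valued combinatorial bound
  set T2 : ℝ := (K₁ : ℝ) ^ 2 * (K₂ : ℝ) * (K₂' : ℝ) * Real.log nn with hT2
  have hreal : ∑ v ∈ S', W v ≤ Real.exp (-T2) := by
    set π : ((Fin n₁ × Fin n₂) ⊕ (Fin n₁ × Fin n₂) → Bool) →
        ((Fin n₁ × Fin n₂) ⊕ (Fin n₁ × Fin n₂) → Bool) :=
      fun v => Sum.elim (fun q => v (Sum.inr q) && v (Sum.inl q)) (fun q => v (Sum.inr q))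
      with hπdef
    have hπinl : ∀ v q, π v (Sum.inl q) = (v (Sum.inr q) && v (Sum.inl q)) := fun v q => rfl
    have hπinr : ∀ v q, π v (Sum.inr q) = v (Sum.inr q) := fun v q => rfl
    have hπidem : ∀ v, π (π v) = π v := by
      intro v; funext i
      rcases i with q | q
      · rw [hπinl, hπinl, hπinr]
        cases h : v (Sum.inr q) <;> simp [h]
      · rw [hπinr, hπinr]
    have hsum1 : ∑ v : ((Fin n₁ × Fin n₂) ⊕ (Fin n₁ × Fin n₂)) → Bool, W v = 1 := by
      have h := Finset.prod_univ_sum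
        (fun _ : (Fin n₁ × Fin n₂) ⊕ (Fin n₁ × Fin n₂) => (Finset.univ : Finset Bool))
        (fun i x => wt i x)
      rw [Fintype.piFinset_univ] at h
      calc ∑ v : ((Fin n₁ × Fin n₂) ⊕ (Fin n₁ × Fin n₂)) → Bool, W v
          = ∑ v : ((Fin n₁ × Fin n₂) ⊕ (Fin n₁ × Fin n₂)) → Bool, ∏ i, wt i (v i) := rfl
        _ = ∏ i, ∑ x : Bool, wt i x := h.symm
        _ = ∏ i : (Fin n₁ × Fin n₂) ⊕ (Fin n₁ × Fin n₂), (1 : ℝ) :=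
            Finset.prod_congr rfl fun i _ => by
              rw [show (∑ x : Bool, wt i x) = wt i true + wt i false from by simp]
              rw [← hwtsum i]; ring
        _ = 1 := Finset.prod_const_one
    have hkey : ∀ b, ∑ v ∈ S'.filter (fun v => π v = b), W v ≤
        Real.exp (-T2) * ∑ v ∈ Finset.univ.filter (fun v => π v = b), W v := by
      intro b
      rcases Finset.eq_empty_or_nonempty (S'.filter (fun v => π v = b)) with hemp | hne
      · rw [hemp, Finset.sum_empty]
        exact mul_nonneg (Real.exp_pos _).le (Finset.sum_nonneg fun v _ => hW0 v)
      obtain ⟨v₀, hv₀⟩ := hne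
      rw [Finset.mem_filter] at hv₀
      obtain ⟨hv₀S, hπv₀⟩ := hv₀
      rw [hS'def, Finset.mem_filter] at hv₀S
      obtain ⟨-, ω₀, hcfg₀, hω₀Ev⟩ := hv₀S
      have hπb : π b = b := by rw [← hπv₀, hπidem]
      have hXfA' : ∀ (i : Fin n₁) (j : Fin n₂) ω, Xf (Sum.inl (i, j)) ω = A ω i j := by
        intro i j ω; rw [hXf]; rfl
      have hXfG' : ∀ (i : Fin n₁) (j : Fin n₂) ω, Xf (Sum.inr (i, j)) ω = G ω i j := by
        intro i j ω; rw [hXf]; rfl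
      have hcfgA : ∀ ω (i : Fin n₁) (j : Fin n₂),
          A ω i j = val (cfg ω (Sum.inl (i, j))) := by
        intro ω i j; rw [← hXfA' i j ω]; exact hval _ ω
      have hcfgG : ∀ ω (i : Fin n₁) (j : Fin n₂),
          G ω i j = val (cfg ω (Sum.inr (i, j))) := by
        intro ω i j; rw [← hXfG' i j ω]; exact hval _ ω
      have hval0 : val false = 0 := by simp [hvaldef]
      have hval1 : val true = 1 := by simp [hvaldef]
      have hbinl : ∀ q, b (Sum.inr q) = false → b (Sum.inl q) = false := by
        intro q hq
        have h := congrFun hπb (Sum.inl q)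
        rw [hπinl, hq, Bool.false_and] at h
        exact h.symm
      have hv₀inr : ∀ q, v₀ (Sum.inr q) = b (Sum.inr q) := by
        intro q; rw [← hπv₀, hπinr]
      have hv₀inl : ∀ q, b (Sum.inr q) = true → v₀ (Sum.inl q) = b (Sum.inl q) := by
        intro q hq
        have h1 := congrFun hπv₀ (Sum.inl q)
        rw [hπinl, hv₀inr q, hq, Bool.true_and] at h1
        exact h1
      set Tst : Finset (Fin n₁ × Fin n₂) :=
        Finset.univ.filter (fun q => b (Sum.inr q) = false) with hTstdef
      set pf : Fin n₁ × Fin n₂ → ℝ := fun q => B (c₁ q.1) (c₂ q.2) with hpfdef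
      set Bh : Fin K₁ → Fin K₂' → ℝ := Bhat (A ω₀) (G ω₀) (ch1 ω₀) (ch2 ω₀) with hBhdef
      set βf : Fin n₁ × Fin n₂ → ℝ := fun q => Bh (ch1 ω₀ q.1) (ch2 ω₀ q.2) with hβfdef
      set D : ℝ := ∑ q ∈ Tst, (pf q - βf q) ^ 2 with hDdef
      set cc : Fin n₁ × Fin n₂ → ℝ := fun q => 2 * (pf q - βf q) with hccdef
      set Nv : (((Fin n₁ × Fin n₂) ⊕ (Fin n₁ × Fin n₂)) → Bool) → ℝ :=
        fun v => ∑ q ∈ Tst, cc q * (val (v (Sum.inl q)) - pf q) with hNvdef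
      have hGω₀ : ∀ (i : Fin n₁) (j : Fin n₂), G ω₀ i j = val (b (Sum.inr (i, j))) := by
        intro i j
        rw [hcfgG ω₀ i j, hcfg₀, ← hπv₀, hπinr]
      have hpf0 : ∀ q : Fin n₁ × Fin n₂, 0 ≤ pf q := by
        intro q; simp only [hpfdef]; exact (hB _ _).1
      have hpf1 : ∀ q : Fin n₁ × Fin n₂, pf q ≤ 1 := by
        intro q; simp only [hpfdef]; exact (hB _ _).2
      -- the bad inequality on the fiber of S'
      have hbad : ∀ v ∈ S'.filter (fun v => π v = b), D + Nv v ≤ -(2 * T2) := by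
        intro v hv
        rw [Finset.mem_filter] at hv
        obtain ⟨hvS, hπv⟩ := hv
        rw [hS'def, Finset.mem_filter] at hvS
        obtain ⟨-, ω, hcfgω, hωEv⟩ := hvS
        have hvinr : ∀ q, v (Sum.inr q) = b (Sum.inr q) := by
          intro q; rw [← hπv, hπinr]
        have hvinl : ∀ q, b (Sum.inr q) = true → v (Sum.inl q) = b (Sum.inl q) := by
          intro q hq
          have h1 := congrFun hπv (Sum.inl q)
          rw [hπinl, hvinr q, hq, Bool.true_and] at h1
          exact h1
        have hGω : ∀ (i : Fin n₁) (j : Fin n₂), G ω i j = val (b (Sum.inr (i, j))) := by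
          intro i j
          rw [hcfgG ω i j, hcfgω, hvinr]
        have hGeq : G ω = G ω₀ := by
          ext i j
          rw [hGω i j, hGω₀ i j]
        have hAv : ∀ (i : Fin n₁) (j : Fin n₂), A ω i j = val (v (Sum.inl (i, j))) := by
          intro i j; rw [hcfgA ω i j, hcfgω]
        have hAmask : ∀ (i : Fin n₁) (j : Fin n₂), b (Sum.inr (i, j)) = true →
            A ω i j = A ω₀ i j := by
          intro i j hb
          rw [hcfgA ω i j, hcfgA ω₀ i j, hcfgω, hcfg₀, hvinl (i, j) hb, hv₀inl (i, j) hb]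
        have hmask : (Matrix.of fun i j => A ω i j * G ω i j) =
            (Matrix.of fun i j => A ω₀ i j * G ω₀ i j) := by
          ext i j
          simp only [Matrix.of_apply]
          cases hbq : b (Sum.inr (i, j))
          · have h0 : G ω i j = 0 := by rw [hGω i j, hbq, hval0]
            have h0' : G ω₀ i j = 0 := by rw [hGω₀ i j, hbq, hval0]
            rw [h0, h0']; ring
          · rw [hGeq, hAmask i j hbq]
        have hch := htrain ω ω₀ hGeq hmask
        have hineq : fittedLoss (A ω) (G ω) (ch1 ω) (ch2 ω) -
            oracleLoss (A ω) (G ω) (Matrix.of fun i j => B (c₁ i) (c₂ j)) ≤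
            -(2 * (K₁ : ℝ) ^ 2 * (K₂ : ℝ) * (K₂' : ℝ) * Real.log nn) := hωEv
        rw [hch.1, hch.2, hGeq] at hineq
        -- Bhat is determined by the training data
        have hBeq : Bhat (A ω) (G ω₀) (ch1 ω₀) (ch2 ω₀) = Bh := by
          rw [hBhdef]
          funext k₁ k₂
          refine Bhat_congr (A ω) (A ω₀) (G ω₀) ?_ _ _ k₁ k₂
          intro i j hG1
          have hb : b (Sum.inr (i, j)) = true := by
            cases hbq : b (Sum.inr (i, j))
            · exfalso; rw [hGω₀ i j, hbq, hval0] at hG1; norm_num at hG1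
            · rfl
          exact hAmask i j hb
        -- conversion of double sums over test entries
        have hconv : ∀ f : Fin n₁ → Fin n₂ → ℝ,
            (∑ i, ∑ j, if G ω₀ i j = 1 then (0 : ℝ) else f i j) = ∑ q ∈ Tst, f q.1 q.2 := by
          intro f
          rw [← Fintype.sum_prod_type']
          rw [hTstdef, Finset.sum_filter]
          apply Finset.sum_congr rfl
          intro q _
          obtain ⟨i, j⟩ := q
          cases hb : b (Sum.inr (i, j))
          · rw [hGω₀ i j, hb, hval0]
            norm_num
          · rw [hGω₀ i j, hb, hval1]
            norm_num
        have hfit : fittedLoss (A ω) (G ω₀) (ch1 ω₀) (ch2 ω₀) =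
            ∑ q ∈ Tst, (A ω q.1 q.2 - Bh (ch1 ω₀ q.1) (ch2 ω₀ q.2)) ^ 2 := by
          unfold fittedLoss
          rw [hBeq]
          exact hconv fun i j => (A ω i j - Bh (ch1 ω₀ i) (ch2 ω₀ j)) ^ 2
        have hora : oracleLoss (A ω) (G ω₀) (Matrix.of fun i j => B (c₁ i) (c₂ j)) =
            ∑ q ∈ Tst, (A ω q.1 q.2 - (Matrix.of fun i j => B (c₁ i) (c₂ j)) q.1 q.2) ^ 2 := by
          unfold oracleLoss
          exact hconv fun i j => (A ω i j - (Matrix.of fun i j => B (c₁ i) (c₂ j)) i j) ^ 2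
        have hloss : fittedLoss (A ω) (G ω₀) (ch1 ω₀) (ch2 ω₀) -
            oracleLoss (A ω) (G ω₀) (Matrix.of fun i j => B (c₁ i) (c₂ j)) = D + Nv v := by
          rw [hfit, hora, ← Finset.sum_sub_distrib]
          simp only [hDdef, hNvdef]
          rw [← Finset.sum_add_distrib]
          apply Finset.sum_congr rfl
          intro q _
          obtain ⟨i, j⟩ := q
          simp only [hccdef, hβfdef, hpfdef, Matrix.of_apply]
          rw [hAv i j]
          ring
        rw [hloss] at hineq
        rw [hT2]
        linarith [hineq]
      -- the per-coordinate structures for the Chernoff computation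
      set tt : ((Fin n₁ × Fin n₂) ⊕ (Fin n₁ × Fin n₂)) → Finset Bool :=
        Sum.elim (fun q => if b (Sum.inr q) = false then (Finset.univ : Finset Bool)
          else {b (Sum.inl q)}) (fun q => ({b (Sum.inr q)} : Finset Bool)) with httdef
      have httinl : ∀ q, tt (Sum.inl q) = if b (Sum.inr q) = false then
          (Finset.univ : Finset Bool) else {b (Sum.inl q)} := fun q => rfl
      have httinr : ∀ q, tt (Sum.inr q) = {b (Sum.inr q)} := fun q => rfl
      set hh : ((Fin n₁ × Fin n₂) ⊕ (Fin n₁ × Fin n₂)) → Bool → ℝ :=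
        fun i x => wt i x * (Sum.elim (fun q => if b (Sum.inr q) = false then
          Real.exp (-(cc q * (val x - pf q)) / 2) else 1) (fun _ => 1) i) with hhhdef
      have hhhinl : ∀ q x, hh (Sum.inl q) x = wt (Sum.inl q) x *
          (if b (Sum.inr q) = false then Real.exp (-(cc q * (val x - pf q)) / 2) else 1) :=
        fun q x => rfl
      have hhhinr : ∀ q x, hh (Sum.inr q) x = wt (Sum.inr q) x := by
        intro q x; rw [hhhdef]; exact mul_one _
      set bd : ((Fin n₁ × Fin n₂) ⊕ (Fin n₁ × Fin n₂)) → ℝ :=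
        Sum.elim (fun q => if b (Sum.inr q) = false then Real.exp ((pf q - βf q) ^ 2 / 2)
          else wt (Sum.inl q) (b (Sum.inl q))) (fun q => wt (Sum.inr q) (b (Sum.inr q)))
        with hbddef
      have hbdinl : ∀ q, bd (Sum.inl q) = if b (Sum.inr q) = false then
          Real.exp ((pf q - βf q) ^ 2 / 2) else wt (Sum.inl q) (b (Sum.inl q)) := fun q => rfl
      have hbdinr : ∀ q, bd (Sum.inr q) = wt (Sum.inr q) (b (Sum.inr q)) := fun q => rfl
      -- the fiber is a product set
      have hfibeq : Finset.univ.filter (fun v => π v = b) = Fintype.piFinset tt := by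
        ext v
        simp only [Finset.mem_filter, Finset.mem_univ, true_and, Fintype.mem_piFinset]
        constructor
        · intro h i
          rcases i with q | q
          · rw [httinl]
            cases hb : b (Sum.inr q)
            · rw [if_pos rfl]; exact Finset.mem_univ _
            · rw [if_neg (by simp)]
              have h1 := congrFun h (Sum.inl q)
              have h2 := congrFun h (Sum.inr q)
              rw [hπinl] at h1
              rw [hπinr] at h2
              rw [Finset.mem_singleton, ← h1, h2, hb, Bool.true_and]
          · rw [httinr, Finset.mem_singleton]
            have h2 := congrFun h (Sum.inr q)
            rw [hπinr] at h2
            exact h2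
        · intro h
          funext i
          rcases i with q | q
          · rw [hπinl]
            have hr := h (Sum.inr q)
            rw [httinr, Finset.mem_singleton] at hr
            cases hb : b (Sum.inr q)
            · rw [hr, hb, Bool.false_and]
              exact (hbinl q hb).symm
            · have hl := h (Sum.inl q)
              rw [httinl, hb, if_neg (by simp), Finset.mem_singleton] at hl
              rw [hr, hb, Bool.true_and]
              exact hl
          · rw [hπinr]
            have hr := h (Sum.inr q)
            rw [httinr, Finset.mem_singleton] at hr
            exact hr
      -- product form of the weighted exponential
      have hprodform : ∀ v, W v * Real.exp (-(Nv v) / 2) = ∏ i, hh i (v i) := by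
        intro v
        have hexp : Real.exp (-(Nv v) / 2) =
            ∏ q ∈ Tst, Real.exp (-(cc q * (val (v (Sum.inl q)) - pf q)) / 2) := by
          rw [← Real.exp_sum]
          congr 1
          simp only [hNvdef]
          rw [← Finset.sum_div, ← Finset.sum_neg_distrib]
        have hinlprod : (∏ q : Fin n₁ × Fin n₂, hh (Sum.inl q) (v (Sum.inl q))) =
            (∏ q : Fin n₁ × Fin n₂, wt (Sum.inl q) (v (Sum.inl q))) *
            ∏ q ∈ Tst, Real.exp (-(cc q * (val (v (Sum.inl q)) - pf q)) / 2) := by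
          calc (∏ q : Fin n₁ × Fin n₂, hh (Sum.inl q) (v (Sum.inl q)))
              = ∏ q : Fin n₁ × Fin n₂, (wt (Sum.inl q) (v (Sum.inl q)) *
                (if b (Sum.inr q) = false then
                  Real.exp (-(cc q * (val (v (Sum.inl q)) - pf q)) / 2) else 1)) :=
                Finset.prod_congr rfl fun q _ => hhhinl q _
            _ = (∏ q : Fin n₁ × Fin n₂, wt (Sum.inl q) (v (Sum.inl q))) *
                ∏ q : Fin n₁ × Fin n₂, (if b (Sum.inr q) = false then
                  Real.exp (-(cc q * (val (v (Sum.inl q)) - pf q)) / 2) else 1) :=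
                Finset.prod_mul_distrib
            _ = (∏ q : Fin n₁ × Fin n₂, wt (Sum.inl q) (v (Sum.inl q))) *
                ∏ q ∈ Tst, Real.exp (-(cc q * (val (v (Sum.inl q)) - pf q)) / 2) := by
                rw [hTstdef, Finset.prod_filter]
        rw [hexp]
        rw [show W v = ∏ i, wt i (v i) from rfl]
        rw [Fintype.prod_sum_type (fun i => wt i (v i)),
          Fintype.prod_sum_type (fun i => hh i (v i))]
        rw [hinlprod, show (∏ q : Fin n₁ × Fin n₂, hh (Sum.inr q) (v (Sum.inr q))) =
          ∏ q : Fin n₁ × Fin n₂, wt (Sum.inr q) (v (Sum.inr q)) from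
          Finset.prod_congr rfl fun q _ => hhhinr q _]
        ring
      -- coordinatewise bounds
      have hh0 : ∀ i x, 0 ≤ hh i x := by
        rintro (q | q) x
        · rw [hhhinl]
          apply mul_nonneg (hwt0 _ _)
          split
          · exact (Real.exp_pos _).le
          · exact zero_le_one
        · rw [hhhinr]
          exact hwt0 _ _
      have hwtF : ∀ q : Fin n₁ × Fin n₂, wt (Sum.inl q) false = 1 - pf q := by
        intro q; simp [hwtdef, hpp, hpfdef]
      have hwtT : ∀ q : Fin n₁ × Fin n₂, wt (Sum.inl q) true = pf q := by
        intro q; simp [hwtdef, hpp, hpfdef]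
      have hcoord : ∀ i, ∑ x ∈ tt i, hh i x ≤ bd i := by
        rintro (q | q)
        · rw [httinl q, hbdinl q]
          cases hb : b (Sum.inr q)
          · rw [if_pos rfl, if_pos rfl]
            have hfree : ∀ x, hh (Sum.inl q) x =
                wt (Sum.inl q) x * Real.exp (-(cc q * (val x - pf q)) / 2) := by
              intro x; rw [hhhinl q x, hb, if_pos rfl]
            rw [Fintype.sum_bool]
            rw [hfree false, hfree true, hwtF q, hwtT q, hval0, hval1]
            rw [show -(cc q * ((1 : ℝ) - pf q)) / 2 = (-(cc q) / 2) * (1 - pf q) from by ring]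
            rw [show -(cc q * ((0 : ℝ) - pf q)) / 2 = (-(cc q) / 2) * (0 - pf q) from by ring]
            rw [show (pf q - βf q) ^ 2 / 2 = (-(cc q) / 2) ^ 2 / 2 from by
              simp only [hccdef]; ring]
            linarith [bern_mgf (pf q) (-(cc q) / 2) (hpf0 q) (hpf1 q)]
          · rw [if_neg (by simp), if_neg (by simp), Finset.sum_singleton]
            rw [hhhinl q (b (Sum.inl q)), hb, if_neg (by simp), mul_one]
        · rw [httinr q, hbdinr q, Finset.sum_singleton, hhhinr q _]
      have hcoordprod : (∏ i, ∑ x ∈ tt i, hh i x) ≤ ∏ i, bd i :=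
        Finset.prod_le_prod (fun i _ => Finset.sum_nonneg fun x _ => hh0 i x)
          (fun i _ => hcoord i)
      -- splitting the products
      have hbdsplit : (∏ i, bd i) = (∏ q ∈ Tst, Real.exp ((pf q - βf q) ^ 2 / 2)) *
          ((∏ q ∈ Finset.univ.filter (fun q : Fin n₁ × Fin n₂ => ¬ b (Sum.inr q) = false),
            wt (Sum.inl q) (b (Sum.inl q))) *
           ∏ q : Fin n₁ × Fin n₂, wt (Sum.inr q) (b (Sum.inr q))) := by
        rw [Fintype.prod_sum_type bd]
        rw [show (∏ q : Fin n₁ × Fin n₂, bd (Sum.inl q)) = ∏ q : Fin n₁ × Fin n₂,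
          (if b (Sum.inr q) = false then Real.exp ((pf q - βf q) ^ 2 / 2)
            else wt (Sum.inl q) (b (Sum.inl q))) from Finset.prod_congr rfl fun q _ => hbdinl q]
        rw [Finset.prod_ite, ← hTstdef]
        rw [show (∏ q : Fin n₁ × Fin n₂, bd (Sum.inr q)) = ∏ q : Fin n₁ × Fin n₂,
          wt (Sum.inr q) (b (Sum.inr q)) from Finset.prod_congr rfl fun q _ => hbdinr q]
        rw [mul_assoc]
      have hWsplit : (∏ i, ∑ x ∈ tt i, wt i x) = (∏ q ∈ Tst, (1 : ℝ)) *
          ((∏ q ∈ Finset.univ.filter (fun q : Fin n₁ × Fin n₂ => ¬ b (Sum.inr q) = false),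
            wt (Sum.inl q) (b (Sum.inl q))) *
           ∏ q : Fin n₁ × Fin n₂, wt (Sum.inr q) (b (Sum.inr q))) := by
        rw [Fintype.prod_sum_type (fun i => ∑ x ∈ tt i, wt i x)]
        rw [show (∏ q : Fin n₁ × Fin n₂, ∑ x ∈ tt (Sum.inl q), wt (Sum.inl q) x) =
          ∏ q : Fin n₁ × Fin n₂, (if b (Sum.inr q) = false then (1 : ℝ)
            else wt (Sum.inl q) (b (Sum.inl q))) from Finset.prod_congr rfl fun q _ => ?_]
        rw [Finset.prod_ite, ← hTstdef]
        rw [show (∏ q : Fin n₁ × Fin n₂, ∑ x ∈ tt (Sum.inr q), wt (Sum.inr q) x) =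
          ∏ q : Fin n₁ × Fin n₂, wt (Sum.inr q) (b (Sum.inr q)) from
          Finset.prod_congr rfl fun q _ => by rw [httinr, Finset.sum_singleton]]
        rw [mul_assoc]
        · cases hb : b (Sum.inr q)
          · rw [httinl, hb, if_pos rfl, if_pos rfl, Fintype.sum_bool, ← hwtsum (Sum.inl q)]
            ring
          · rw [httinl, hb, if_neg (by simp), if_neg (by simp), Finset.sum_singleton]
      have hexpD : (∏ q ∈ Tst, Real.exp ((pf q - βf q) ^ 2 / 2)) = Real.exp (D / 2) := by
        rw [← Real.exp_sum]
        congr 1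
        simp only [hDdef]
        rw [← Finset.sum_div]
      have hbdeq : (∏ i, bd i) = Real.exp (D / 2) * ∏ i, ∑ x ∈ tt i, wt i x := by
        rw [hbdsplit, hWsplit, hexpD, Finset.prod_const_one]
        ring
      have hfibW : ∑ v ∈ Finset.univ.filter (fun v => π v = b), W v =
          ∏ i, ∑ x ∈ tt i, wt i x := by
        rw [hfibeq]
        rw [show (∑ v ∈ Fintype.piFinset tt, W v) =
          ∑ v ∈ Fintype.piFinset tt, ∏ i, wt i (v i) from
          Finset.sum_congr rfl fun v _ => rfl]
        exact (Finset.prod_univ_sum tt fun i x => wt i x).symm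
      have hfibhh : ∑ v ∈ Finset.univ.filter (fun v => π v = b),
          W v * Real.exp (-(Nv v) / 2) = ∏ i, ∑ x ∈ tt i, hh i x := by
        rw [hfibeq]
        calc ∑ v ∈ Fintype.piFinset tt, W v * Real.exp (-(Nv v) / 2)
            = ∑ v ∈ Fintype.piFinset tt, ∏ i, hh i (v i) :=
              Finset.sum_congr rfl fun v _ => hprodform v
          _ = ∏ i, ∑ x ∈ tt i, hh i x := (Finset.prod_univ_sum tt fun i x => hh i x).symm
      -- assembling the Chernoff bound
      calc ∑ v ∈ S'.filter (fun v => π v = b), W v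
          ≤ ∑ v ∈ S'.filter (fun v => π v = b),
              (Real.exp (-T2) * Real.exp (-(D / 2))) * (W v * Real.exp (-(Nv v) / 2)) := by
            apply Finset.sum_le_sum
            intro v hv
            have hbd := hbad v hv
            have hexp1 : (1 : ℝ) ≤ Real.exp (-T2) * Real.exp (-(D / 2)) *
                Real.exp (-(Nv v) / 2) := by
              rw [← Real.exp_add, ← Real.exp_add]
              apply Real.one_le_exp
              linarith
            calc W v = W v * 1 := (mul_one _).symm
              _ ≤ W v * (Real.exp (-T2) * Real.exp (-(D / 2)) * Real.exp (-(Nv v) / 2)) :=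
                  mul_le_mul_of_nonneg_left hexp1 (hW0 v)
              _ = (Real.exp (-T2) * Real.exp (-(D / 2))) * (W v * Real.exp (-(Nv v) / 2)) := by
                  ring
        _ ≤ ∑ v ∈ Finset.univ.filter (fun v => π v = b),
              (Real.exp (-T2) * Real.exp (-(D / 2))) * (W v * Real.exp (-(Nv v) / 2)) := by
            apply Finset.sum_le_sum_of_subset_of_nonneg
            · exact Finset.filter_subset_filter _ (Finset.subset_univ _)
            · intro v _ _
              exact mul_nonneg (mul_nonneg (Real.exp_pos _).le (Real.exp_pos _).le)
                (mul_nonneg (hW0 v) (Real.exp_pos _).le)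
        _ = (Real.exp (-T2) * Real.exp (-(D / 2))) *
              ∑ v ∈ Finset.univ.filter (fun v => π v = b),
                W v * Real.exp (-(Nv v) / 2) := by
            rw [Finset.mul_sum]
        _ = (Real.exp (-T2) * Real.exp (-(D / 2))) * ∏ i, ∑ x ∈ tt i, hh i x := by
            rw [hfibhh]
        _ ≤ (Real.exp (-T2) * Real.exp (-(D / 2))) * ∏ i, bd i :=
            mul_le_mul_of_nonneg_left hcoordprod
              (mul_nonneg (Real.exp_pos _).le (Real.exp_pos _).le)
        _ = Real.exp (-T2) * ((Real.exp (-(D / 2)) * Real.exp (D / 2)) *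
              ∏ i, ∑ x ∈ tt i, wt i x) := by
            rw [hbdeq]; ring
        _ = Real.exp (-T2) * ∑ v ∈ Finset.univ.filter (fun v => π v = b), W v := by
            rw [← Real.exp_add, show -(D / 2) + D / 2 = 0 from by ring, Real.exp_zero,
              one_mul, hfibW]
    calc ∑ v ∈ S', W v
        = ∑ b : ((Fin n₁ × Fin n₂) ⊕ (Fin n₁ × Fin n₂)) → Bool,
            ∑ v ∈ S'.filter (fun v => π v = b), W v :=
          (Finset.sum_fiberwise_of_maps_to (fun v _ => Finset.mem_univ (π v)) W).symm
      _ ≤ ∑ b : ((Fin n₁ × Fin n₂) ⊕ (Fin n₁ × Fin n₂)) → Bool,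
            Real.exp (-T2) * ∑ v ∈ Finset.univ.filter (fun v => π v = b), W v :=
          Finset.sum_le_sum fun b _ => hkey b
      _ = Real.exp (-T2) * ∑ b : ((Fin n₁ × Fin n₂) ⊕ (Fin n₁ × Fin n₂)) → Bool,
            ∑ v ∈ Finset.univ.filter (fun v => π v = b), W v := by
          rw [Finset.mul_sum]
      _ = Real.exp (-T2) * ∑ v : ((Fin n₁ × Fin n₂) ⊕ (Fin n₁ × Fin n₂)) → Bool, W v := by
          rw [Finset.sum_fiberwise_of_maps_to (fun v _ => Finset.mem_univ (π v)) W]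
      _ = Real.exp (-T2) := by rw [hsum1, mul_one]
  have harith : Real.exp (-T2) ≤ 2 * (K₁ : ℝ) ^ 2 * (K₂ : ℝ) / ((nn : ℕ) : ℝ) ^ 3 := by
    have hnR1 : (1 : ℝ) ≤ (nn : ℝ) := by exact_mod_cast hnn1
    have hlog : 0 ≤ Real.log nn := Real.log_nonneg hnR1
    have h1 : (1 : ℝ) ≤ (K₁ : ℝ) := by exact_mod_cast hK₁pos
    have h2 : (1 : ℝ) ≤ (K₂ : ℝ) := by exact_mod_cast hK₂pos
    have h3 : (3 : ℝ) ≤ (K₂' : ℝ) := by exact_mod_cast (show 3 ≤ K₂' by omega)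
    have hT2ge : 3 * Real.log nn ≤ T2 := by
      rw [hT2]
      have hm : (3 : ℝ) ≤ (K₁ : ℝ) ^ 2 * (K₂ : ℝ) * (K₂' : ℝ) := by
        have h4 : (1 : ℝ) ≤ (K₁ : ℝ) ^ 2 * (K₂ : ℝ) := by nlinarith
        calc (3 : ℝ) ≤ (K₂' : ℝ) := h3
          _ = 1 * (K₂' : ℝ) := (one_mul _).symm
          _ ≤ (K₁ : ℝ) ^ 2 * (K₂ : ℝ) * (K₂' : ℝ) :=
              mul_le_mul_of_nonneg_right h4 (by linarith)
      exact mul_le_mul_of_nonneg_right hm hlog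
    have e1 : Real.exp (-T2) ≤ Real.exp (-(3 * Real.log nn)) :=
      Real.exp_le_exp.mpr (by linarith)
    have e2 : Real.exp (-(3 * Real.log nn)) = (((nn : ℕ) : ℝ) ^ 3)⁻¹ := by
      rw [show -(3 * Real.log ((nn : ℕ) : ℝ)) = Real.log ((((nn : ℕ) : ℝ) ^ 3)⁻¹) by
        rw [Real.log_inv, Real.log_pow]; push_cast; ring]
      exact Real.exp_log (by positivity)
    refine le_trans e1 (le_trans (le_of_eq e2) ?_)
    have hnpos : (0 : ℝ) < ((nn : ℕ) : ℝ) ^ 3 := pow_pos (by linarith) 3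
    rw [inv_eq_one_div]
    exact (div_le_div_iff_of_pos_right hnpos).mpr (by nlinarith)
  calc ℙ Ev ≤ ∑ v ∈ S', ℙ (⋂ i, Xf i ⁻¹' {val (v i)}) :=
        le_trans (measure_mono hsub) (measure_biUnion_finset_le _ _)
    _ = ∑ v ∈ S', ENNReal.ofReal (W v) := Finset.sum_congr rfl fun v _ => hatom v
    _ = ENNReal.ofReal (∑ v ∈ S', W v) :=
        (ENNReal.ofReal_sum_of_nonneg fun v _ => hW0 v).symm
    _ ≤ ENNReal.ofReal (2 * (K₁ : ℝ) ^ 2 * (K₂ : ℝ) / ((nn : ℕ) : ℝ) ^ 3) :=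
        ENNReal.ofReal_le_ofReal (le_trans hreal harith)

end BCV
end
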